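/- Let α be an arrow such that ᾱ is virtual and ᾱ is not a loop. Let A'_α = x_{g(α)} x_{g²(α)} ⋯ x_{g^{m_α n_α − 2}(α)} (so that x_α A'_α = A_α), and set φ = x_{f(α)} x_{f(ᾱ)} − c_ᾱ c_α A'_α in Λ. Then φ x_{f²(ᾱ)} = 0. -/

import Mathlib

/-- A triangulation quiver: a connected 2-regular quiver `(Q₀ = V, Q₁ = A, s, t)`
with at least two vertices, together with a permutation `f` of the arrows with
`t α = s (f α)` and `f³ = id`.  Two-regularity is encoded via the involution
`bar` on arrows (`bar α` is the unique arrow `≠ α` with the same source);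
the in-degree condition follows from `f` being a bijection. -/
structure TQ (V A : Type) [Fintype V] [DecidableEq V] [Fintype A] [DecidableEq A] where
  s : A → V
  t : A → V
  bar : A → A
  bar_ne : ∀ a, bar a ≠ a
  bar_invol : ∀ a, bar (bar a) = a
  s_bar : ∀ a, s (bar a) = s a
  bar_complete : ∀ a b, s b = s a → b = a ∨ b = bar a
  s_surj : ∀ i, ∃ a, s a = i
  f : Equiv.Perm A
  t_eq : ∀ a, t a = s (f a)
  f_cube : ∀ a, f (f (f a)) = a
  connected : ∀ i j : V, Relation.ReflTransGen
      (fun p q => ∃ e, (s e = p ∧ t e = q) ∨ (s e = q ∧ t e = p)) i j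
  two_vertices : 2 ≤ Fintype.card V

variable {V A : Type} [Fintype V] [DecidableEq V] [Fintype A] [DecidableEq A]

/-- The permutation `g` of arrows, `g α = \overline{f α}`. -/
def TQ.g (Q : TQ V A) (a : A) : A := Q.bar (Q.f a)

/-- `n α` is the length of the `g`-cycle of `α`. -/
noncomputable def TQ.n (Q : TQ V A) (a : A) : ℕ := Function.minimalPeriod Q.g a

/-- A loop is an arrow with equal source and target. -/
def TQ.IsLoop (Q : TQ V A) (a : A) : Prop := Q.s a = Q.t a

/-- A weight function: positive integers `m α`, constant on `g`-cycles. -/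
structure Weights (Q : TQ V A) where
  m : A → ℕ
  m_pos : ∀ a, 0 < m a
  m_g : ∀ a, m (Q.g a) = m a

/-- An arrow `α` is virtual if `m α * n α = 2`. -/
def Weights.Virtual {Q : TQ V A} (W : Weights Q) (a : A) : Prop := W.m a * Q.n a = 2

/-- The Assumption: (1) `m α n α ≥ 2` for all `α`; (2) `m α n α ≥ 3` whenever `ᾱ` is
virtual and not a loop; (3) `m α n α ≥ 4` whenever `ᾱ` is virtual and a loop. -/
def Weights.Assumption {Q : TQ V A} (W : Weights Q) : Prop :=
  (∀ a, 2 ≤ W.m a * Q.n a) ∧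
  (∀ a, W.Virtual (Q.bar a) → ¬ Q.IsLoop (Q.bar a) → 3 ≤ W.m a * Q.n a) ∧
  (∀ a, W.Virtual (Q.bar a) → Q.IsLoop (Q.bar a) → 4 ≤ W.m a * Q.n a)

/-- The data of an associative unital `K`-algebra `Λ` generated by pairwise orthogonal
idempotents `e i` summing to `1`, elements `x α ∈ e (s α) * Λ * e (t α)`, and nonzero
parameters `c α ∈ K` constant on `g`-cycles. -/
structure AlgData (Q : TQ V A) (W : Weights Q) (K : Type) [Field K]
    (Λ : Type) [Ring Λ] [Algebra K Λ] where
  e : V → Λ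
  x : A → Λ
  c : A → K
  c_ne : ∀ a, c a ≠ 0
  c_g : ∀ a, c (Q.g a) = c a
  e_orth : ∀ i j, e i * e j = if i = j then e i else 0
  e_sum : ∑ i, e i = 1
  x_sandwich : ∀ a, e (Q.s a) * x a * e (Q.t a) = x a

variable {Q : TQ V A} {W : Weights Q} {K : Type} [Field K] {Λ : Type} [Ring Λ] [Algebra K Λ]

/-- `B α = x_α x_{g α} ⋯ x_{g^{m_α n_α − 1} α}`, the full product along the `g`-cycle. -/
noncomputable def AlgData.B (D : AlgData Q W K Λ) (a : A) : Λ :=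
  ((List.range (W.m a * Q.n a)).map (fun k => D.x (Q.g^[k] a))).prod

/-- `A α = x_α x_{g α} ⋯ x_{g^{m_α n_α − 2} α}`, of length `m_α n_α − 1`. -/
noncomputable def AlgData.Apath (D : AlgData Q W K Λ) (a : A) : Λ :=
  ((List.range (W.m a * Q.n a - 1)).map (fun k => D.x (Q.g^[k] a))).prod

/-- The defining relations (R1), (R2), (R3) of a weighted surface algebra. -/
def AlgData.Rels (D : AlgData Q W K Λ) : Prop :=
  (∀ a, D.x a * D.x (Q.f a) = D.c (Q.bar a) • D.Apath (Q.bar a)) ∧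
  (∀ a, ¬ W.Virtual (Q.f (Q.f a)) →
      ¬ (W.Virtual (Q.f (Q.bar a)) ∧ W.m (Q.bar a) = 1 ∧ Q.n (Q.bar a) = 3) →
      D.x a * D.x (Q.f a) * D.x (Q.g (Q.f a)) = 0) ∧
  (∀ a, ¬ W.Virtual (Q.f a) →
      ¬ (W.Virtual (Q.f (Q.f a)) ∧ W.m (Q.f a) = 1 ∧ Q.n (Q.f a) = 3) →
      D.x a * D.x (Q.g a) * D.x (Q.f (Q.g a)) = 0)

/-- `J`: the two-sided ideal of `Λ` generated by the `x α`, as a `K`-submodule. -/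
def AlgData.J (D : AlgData Q W K Λ) : Submodule K Λ :=
  Submodule.span K {z | ∃ (a : A) (u v : Λ), z = u * D.x a * v}

/-! Since `ᾱ` is virtual, its `g`-cycle is `ᾱ → f² α → ᾱ`, so relation (R1) at `f ᾱ` reads
`x_{f ᾱ} x_{f² ᾱ} = c_ᾱ x_{f² α}`. Hence `x_{f α} x_{f ᾱ} x_{f² ᾱ} = c_ᾱ x_{f α} x_{f² α}`, which
(R1) at `f α` turns into `c_ᾱ c_α A_{g α}`. Finally `A_{g α} = A'_α x_{f² ᾱ}`: the last arrow of
`A_{g α}` is `g^{m_α n_α - 1} α = g⁻¹ α = f² ᾱ`. -/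

namespace TQ

variable (Q : TQ V A)

theorem g_injective : Function.Injective Q.g :=
  (Function.Involutive.injective Q.bar_invol).comp Q.f.injective

theorem mem_periodicPts_g (a : A) : a ∈ Function.periodicPts Q.g :=
  Q.g_injective.mem_periodicPts a

theorem n_pos (a : A) : 0 < Q.n a :=
  Function.minimalPeriod_pos_of_mem_periodicPts (Q.mem_periodicPts_g a)

theorem n_g (a : A) : Q.n (Q.g a) = Q.n a :=
  Function.minimalPeriod_apply (Q.mem_periodicPts_g a)

theorem g_f_f (a : A) : Q.g (Q.f (Q.f a)) = Q.bar a := by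
  rw [g, f_cube]

theorem g_f_f_bar (a : A) : Q.g (Q.f (Q.f (Q.bar a))) = a := by
  rw [g_f_f, bar_invol]

end TQ

namespace Weights

variable (W : Weights Q)

theorem virtual_g {a : A} (h : W.Virtual a) : W.Virtual (Q.g a) := by
  rwa [Virtual, W.m_g, Q.n_g]

theorem iterate_g_m_mul_n (a : A) : Q.g^[W.m a * Q.n a] a = a :=
  (Function.isPeriodicPt_minimalPeriod Q.g a).const_mul (W.m a)

theorem iterate_g_m_mul_n_sub_one (a : A) :
    Q.g^[W.m a * Q.n a - 1] a = Q.f (Q.f (Q.bar a)) := by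
  have hpos : 0 < W.m a * Q.n a := Nat.mul_pos (W.m_pos a) (Q.n_pos a)
  apply Q.g_injective
  rw [← Function.iterate_succ_apply' Q.g, Nat.succ_eq_add_one, Nat.sub_add_cancel hpos,
    W.iterate_g_m_mul_n, Q.g_f_f_bar]

theorem g_g_of_virtual {a : A} (h : W.Virtual a) : Q.g (Q.g a) = a := by
  have h2 : W.m a * Q.n a = 2 := h
  have hper := W.iterate_g_m_mul_n a
  rw [h2] at hper
  exact hper

theorem g_bar_of_virtual_bar {a : A} (h : W.Virtual (Q.bar a)) :
    Q.g (Q.bar a) = Q.f (Q.f a) :=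
  Q.g_injective (by rw [W.g_g_of_virtual h, Q.g_f_f])

end Weights

namespace AlgData

variable (D : AlgData Q W K Λ)

theorem Apath_of_virtual {a : A} (h : W.Virtual a) : D.Apath a = D.x a := by
  have h2 : W.m a * Q.n a = 2 := h
  simp [Apath, h2]

theorem Apath_g {a : A} (hN : 2 ≤ W.m a * Q.n a) :
    D.Apath (Q.g a) =
      ((List.range (W.m a * Q.n a - 2)).map (fun k => D.x (Q.g^[k + 1] a))).prod *
        D.x (Q.f (Q.f (Q.bar a))) := by
  obtain ⟨k, hk⟩ : ∃ k, W.m a * Q.n a = k + 2 := ⟨_, (Nat.sub_add_cancel hN).symm⟩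
  rw [Apath, W.m_g, Q.n_g, ← W.iterate_g_m_mul_n_sub_one, hk]
  exact List.prod_range_succ _ _

variable {D}

theorem Rels.x_f_mul_x_f_f (hR : D.Rels) (a : A) :
    D.x (Q.f a) * D.x (Q.f (Q.f a)) = D.c a • D.Apath (Q.g a) :=
  (hR.1 (Q.f a)).trans (by rw [← D.c_g a]; rfl)

end AlgData

theorem stmt19_general (Q : TQ V A) (W : Weights Q) (hA : W.Assumption)
    {K : Type} [Field K] {Λ : Type} [Ring Λ] [Algebra K Λ]
    (D : AlgData Q W K Λ) (hR : D.Rels) (α : A)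
    (hv : W.Virtual (Q.bar α)) :
    (D.x (Q.f α) * D.x (Q.f (Q.bar α)) -
        (D.c (Q.bar α) * D.c α) •
          ((List.range (W.m α * Q.n α - 2)).map (fun k => D.x (Q.g^[k + 1] α))).prod) *
      D.x (Q.f (Q.f (Q.bar α))) = 0 := by
  have hN : 2 ≤ W.m α * Q.n α := hA.1 α
  have hcycle : D.x (Q.f (Q.bar α)) * D.x (Q.f (Q.f (Q.bar α))) =
      D.c (Q.bar α) • D.x (Q.f (Q.f α)) := by
    rw [hR.x_f_mul_x_f_f, D.Apath_of_virtual (W.virtual_g hv), W.g_bar_of_virtual_bar hv]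
  rw [sub_mul, mul_assoc, hcycle, mul_smul_comm, hR.x_f_mul_x_f_f, D.Apath_g hN,
    smul_mul_assoc, smul_smul, sub_self]

/-- if `ᾱ` is virtual and not a loop, and
`φ = x_{f α} x_{f ᾱ} − c_ᾱ c_α A'_α` where `x_α A'_α = A_α`, then `φ x_{f² ᾱ} = 0`. -/
theorem stmt19 (Q : TQ V A) (W : Weights Q) (h3 : 3 ≤ Fintype.card V) (hA : W.Assumption)
    {K : Type} [Field K] {Λ : Type} [Ring Λ] [Algebra K Λ]
    (D : AlgData Q W K Λ) (hR : D.Rels) (α : A)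
    (hv : W.Virtual (Q.bar α)) (hl : ¬ Q.IsLoop (Q.bar α)) :
    (D.x (Q.f α) * D.x (Q.f (Q.bar α)) -
        (D.c (Q.bar α) * D.c α) •
          ((List.range (W.m α * Q.n α - 2)).map (fun k => D.x (Q.g^[k + 1] α))).prod) *
      D.x (Q.f (Q.f (Q.bar α))) = 0 :=
  stmt19_general Q W hA D hR α hv
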